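/- Let Δ be a convex subgroup of Γ with {0} ≠ Δ ≠ Γ, with coarsened valuation ring 𝒪̇ and its maximal ideal 𝔪̇, and specialization K̇ = 𝒪̇/𝔪̇. Suppose P ∈ 𝒪̇{Y} ∖ 𝔪̇{Y}, b ∈ 𝒪̇, and h ∈ 𝒪̇ ∖ 𝔪̇. Then ddeg Ṗ_{+ḃ} = ddeg P_{+b} and ddeg Ṗ_{×ḣ} = ddeg P_{×h}, where Ṗ ∈ K̇{Y} is obtained by applying the residue map 𝒪̇ → K̇ to the coefficients of P. -/

import Mathlib

/- Preamble: valued differential fields (equicharacteristic 0, small derivation),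
differential polynomials, dominant degree, pc-sequences, coarsening/specialization,
and the differential-henselian configuration property, following
"Aschenbrenner–van den Dries–van der Hoeven" style conventions. -/

open MvPolynomial

universe u

/-- A valued differential field of equicharacteristic zero with small derivation:
a field `K` with a surjective (additive) valuation `v : K → WithTop Γ` (`v a = ⊤ ↔ a = 0`)
onto an ordered abelian group `Γ`, and a derivation `der`, such that `der` maps the
maximal ideal of the valuation ring into itself, and the residue field has
characteristic zero. -/
structure VDF (K : Type u) [Field K] (Γ : Type u) [AddCommGroup Γ] [LinearOrder Γ] [IsOrderedAddMonoid Γ] where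
  v : K → WithTop Γ
  der : K → K
  v_eq_top_iff : ∀ a : K, v a = ⊤ ↔ a = 0
  v_mul : ∀ a b : K, v (a * b) = v a + v b
  v_add : ∀ a b : K, min (v a) (v b) ≤ v (a + b)
  v_surjective : ∀ γ : Γ, ∃ a : K, v a = (γ : WithTop Γ)
  equichar_zero : ∀ n : ℕ, n ≠ 0 → v (n : K) = 0
  der_add : ∀ a b : K, der (a + b) = der a + der b
  der_mul : ∀ a b : K, der (a * b) = a * der b + der a * b
  small_der : ∀ a : K, 0 < v a → 0 < v (der a)

namespace VDF

variable {K : Type u} [Field K] {Γ : Type u} [AddCommGroup Γ] [LinearOrder Γ] [IsOrderedAddMonoid Γ]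

/-- the derivation of `K` is nontrivial -/
def DerNontrivial (S : VDF K Γ) : Prop := ∃ a : K, S.der a ≠ 0

/-- the valuation of `K` is nontrivial -/
def ValNontrivial (S : VDF K Γ) : Prop := ∃ a : K, S.v a ≠ 0 ∧ S.v a ≠ ⊤

/-- the derivation induced on the residue field is nontrivial:
some element of the valuation ring has derivative a unit of the valuation ring -/
def ResidueDerNontrivial (S : VDF K Γ) : Prop := ∃ a : K, 0 ≤ S.v a ∧ S.v (S.der a) = 0

/-- the residue field `k` is linearly surjective: for all `a_0, …, a_r` in the valuation
ring with `a_r` a unit there is `y` in the valuation ring with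
`1 + a_0 y + a_1 y' + ⋯ + a_r y⁽ʳ⁾ ≡ 0` modulo the maximal ideal -/
def ResidueLinSurj (S : VDF K Γ) : Prop :=
  ∀ (r : ℕ) (a : ℕ → K), (∀ i, i ≤ r → 0 ≤ S.v (a i)) → S.v (a r) = 0 →
    ∃ y : K, 0 ≤ S.v y ∧
      0 < S.v (1 + ∑ i ∈ Finset.range (r + 1), a i * S.der^[i] y)

/-- `K` has few constants: the constant field lies in the valuation ring -/
def FewConstants (S : VDF K Γ) : Prop := ∀ a : K, S.der a = 0 → 0 ≤ S.v a

/-- `K` is asymptotic: for nonzero `f, g` in the maximal ideal,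
`v f > v g ↔ v f' > v g'` -/
def Asymptotic (S : VDF K Γ) : Prop :=
  ∀ f g : K, f ≠ 0 → g ≠ 0 → 0 < S.v f → 0 < S.v g →
    (S.v g < S.v f ↔ S.v (S.der g) < S.v (S.der f))

/-- evaluation of a differential polynomial `P ∈ K{Y}` (the variable `i` of the
multivariate polynomial ring stands for `Y⁽ⁱ⁾`) at `b ∈ K` -/
noncomputable def evalD (S : VDF K Γ) (b : K) (P : MvPolynomial ℕ K) : K :=
  MvPolynomial.eval (fun i => S.der^[i] b) P

/-- `v P`: the minimum valuation of the coefficients of `P` -/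
noncomputable def vP (S : VDF K Γ) (P : MvPolynomial ℕ K) : WithTop Γ :=
  P.support.inf fun m => S.v (P.coeff m)

end VDF

/-- total degree of a monomial -/
def monDeg (m : ℕ →₀ ℕ) : ℕ := m.sum fun _ n => n

/-- the degree-`d` homogeneous part `P_d` of a differential polynomial `P` -/
noncomputable def homPart {K : Type u} [Field K] (P : MvPolynomial ℕ K) (d : ℕ) :
    MvPolynomial ℕ K :=
  ∑ m ∈ P.support.filter fun m => monDeg m = d, monomial m (P.coeff m)

/-- the order `r_P` of a differential polynomial: the largest `r` such that `Y⁽ʳ⁾`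
occurs in `P` -/
noncomputable def dpOrder {K : Type u} [Field K] (P : MvPolynomial ℕ K) : ℕ :=
  P.support.sup fun m => m.support.sup id

/-- the complexity `c(P) = (r_P, s_P, t_P)` of a differential polynomial, ordered
lexicographically -/
noncomputable def dpComplexity {K : Type u} [Field K] (P : MvPolynomial ℕ K) :
    Lex (ℕ × Lex (ℕ × ℕ)) :=
  toLex (dpOrder P, toLex (P.degreeOf (dpOrder P), P.totalDegree))

/-- applying a map `π` to the coefficients of a differential polynomial -/
noncomputable def mapCoeffs {K K' : Type u} [Field K] [Field K'] (π : K → K')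
    (P : MvPolynomial ℕ K) : MvPolynomial ℕ K' :=
  ∑ m ∈ P.support, monomial m (π (P.coeff m))

namespace VDF

variable {K : Type u} [Field K] {Γ : Type u} [AddCommGroup Γ] [LinearOrder Γ] [IsOrderedAddMonoid Γ]

/-- the dominant degree `ddeg P`: the (total) degree of the dominant part of `P`,
i.e. the largest degree of a monomial of `P` whose coefficient has minimum valuation -/
noncomputable def ddeg (S : VDF K Γ) (P : MvPolynomial ℕ K) : ℕ :=
  (P.support.filter fun m => S.v (P.coeff m) = S.vP P).sup monDeg

/-- the additive conjugate `P_{+a} = P(a + Y)` -/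
noncomputable def addConj (S : VDF K Γ) (a : K) (P : MvPolynomial ℕ K) :
    MvPolynomial ℕ K :=
  MvPolynomial.bind₁ (fun i => MvPolynomial.C (S.der^[i] a) + MvPolynomial.X i) P

/-- the multiplicative conjugate `P_{×a} = P(aY)`, using
`(aY)⁽ⁱ⁾ = ∑_{j ≤ i} (i choose j) a⁽ⁱ⁻ʲ⁾ Y⁽ʲ⁾` -/
noncomputable def mulConj (S : VDF K Γ) (a : K) (P : MvPolynomial ℕ K) :
    MvPolynomial ℕ K :=
  MvPolynomial.bind₁
    (fun i => ∑ j ∈ Finset.range (i + 1),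
      MvPolynomial.C ((i.choose j : K) * S.der^[i - j] a) * MvPolynomial.X j) P

/-- `ddeg_{≥γ} P := max { ddeg P_{×f} : f ∈ K^×, v f ≥ γ }` -/
noncomputable def ddegGe (S : VDF K Γ) (γ : Γ) (P : MvPolynomial ℕ K) : ℕ :=
  sSup {d : ℕ | ∃ f : K, f ≠ 0 ∧ (γ : WithTop Γ) ≤ S.v f ∧ d = S.ddeg (S.mulConj f P)}

/-- `K` is differential-henselian: the residue field is linearly surjective, and every
`P ∈ 𝒪{Y}` with `v(P_0) > 0` and `v(P_1) = 0` has a zero in the maximal ideal -/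
def DHenselian (S : VDF K Γ) : Prop :=
  S.ResidueLinSurj ∧
  ∀ P : MvPolynomial ℕ K, P ≠ 0 → (∀ m, 0 ≤ S.v (P.coeff m)) →
    0 < S.vP (homPart P 0) → S.vP (homPart P 1) = 0 →
    ∃ y : K, 0 < S.v y ∧ S.evalD y P = 0

section Sequences

variable {I : Type u} [LinearOrder I]

/-- `(a_ρ)` is a pseudocauchy sequence -/
def IsPcSeq (S : VDF K Γ) (a : I → K) : Prop :=
  ∃ i₀ : I, ∀ i j k : I, i₀ < i → i < j → j < k →
    S.v (a j - a i) < S.v (a k - a j)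

/-- `b` is a pseudolimit of `(a_ρ)`: `v (b - a_ρ)` is eventually strictly increasing -/
def Pseudolim (S : VDF K Γ) (a : I → K) (b : K) : Prop :=
  ∃ i₀ : I, ∀ i j : I, i₀ < i → i < j → S.v (b - a i) < S.v (b - a j)

/-- a sequence pseudoconverges to `0`: its valuations are eventually strictly
increasing -/
def PcToZero (S : VDF K Γ) (c : I → K) : Prop :=
  ∃ i₀ : I, ∀ i j : I, i₀ < i → i < j → S.v (c i) < S.v (c j)

/-- `(a_ρ)` is divergent: it has no pseudolimit in `K` -/
def Divergent (S : VDF K Γ) (a : I → K) : Prop := ¬ ∃ b : K, S.Pseudolim a b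

/-- `γ` is eventually the sequence `γ_ρ = v (a_{ρ+1} - a_ρ)` associated to `(a_ρ)` -/
def GammaEq (S : VDF K Γ) [SuccOrder I] (a : I → K) (γ : I → Γ) : Prop :=
  ∃ i₀ : I, ∀ i : I, i₀ < i → S.v (a (Order.succ i) - a i) = (γ i : WithTop Γ)

/-- the dominant degree of `P` in the cut of `(a_ρ)`: the eventual value of
`ddeg_{≥γ_ρ} P_{+a_ρ}` -/
noncomputable def ddegCut (S : VDF K Γ) (a : I → K) (γ : I → Γ)
    (P : MvPolynomial ℕ K) : ℕ :=
  sSup {d : ℕ | ∃ i₀ : I, ∀ i : I, i₀ < i → S.ddegGe (γ i) (S.addConj (a i) P) = d}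

end Sequences

/-- an embedding of valued differential fields (with value group embedding) -/
structure Hom {L : Type u} [Field L] {Γ' : Type u} [AddCommGroup Γ'] [LinearOrder Γ'] [IsOrderedAddMonoid Γ']
    (S : VDF K Γ) (T : VDF L Γ') where
  toRing : K →+* L
  toGrp : Γ →+ Γ'
  grp_strictMono : StrictMono toGrp
  map_der : ∀ a : K, toRing (S.der a) = T.der (toRing a)
  map_v : ∀ a : K, T.v (toRing a) = WithTop.map (⇑toGrp) (S.v a)

variable {L : Type u} [Field L] {Γ' : Type u} [AddCommGroup Γ'] [LinearOrder Γ'] [IsOrderedAddMonoid Γ']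

/-- an extension is immediate if it induces the same value group and residue field -/
def Hom.Immediate {S : VDF K Γ} {T : VDF L Γ'} (f : Hom S T) : Prop :=
  Function.Surjective f.toGrp ∧
  ∀ b : L, 0 ≤ T.v b → ∃ a : K, 0 ≤ S.v a ∧ 0 < T.v (b - f.toRing a)

/-- `b ∈ L` is differentially algebraic over (the image of) `K` -/
def Hom.DAlgElem {S : VDF K Γ} {T : VDF L Γ'} (f : Hom S T) (b : L) : Prop :=
  ∃ P : MvPolynomial ℕ K, P ≠ 0 ∧ T.evalD b (P.map f.toRing) = 0

/-- the extension `L` is differentially algebraic over `K` -/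
def Hom.DAlgebraic {S : VDF K Γ} {T : VDF L Γ'} (f : Hom S T) : Prop :=
  ∀ b : L, f.DAlgElem b

/-- two pc-sequences in `K` are equivalent: they have the same pseudolimits in every
extension of `K` -/
def EquivPc (S : VDF K Γ) {I : Type u} [LinearOrder I] {J : Type u} [LinearOrder J]
    (a : I → K) (b : J → K) : Prop :=
  ∀ (M : Type u) (Δ : Type u) [Field M] [AddCommGroup Δ] [LinearOrder Δ] [IsOrderedAddMonoid Δ],
    ∀ (T : VDF M Δ) (f : Hom S T) (c : M),
      (T.Pseudolim (fun i => f.toRing (a i)) c ↔ T.Pseudolim (fun j => f.toRing (b j)) c)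

/-- there is a pc-sequence `(b_σ)` equivalent to `(a_ρ)` with `G(b_σ) ⇝ 0` -/
def HasMinWitness (S : VDF K Γ) {I : Type u} [LinearOrder I] (a : I → K)
    (G : MvPolynomial ℕ K) : Prop :=
  ∃ (J : Type u) (lo : LinearOrder J),
    letI := lo
    WellFoundedLT J ∧ NoMaxOrder J ∧
      ∃ b : J → K, S.IsPcSeq b ∧ S.EquivPc a b ∧
        S.PcToZero (fun j => S.evalD (b j) G)

/-- `G` is a minimal differential polynomial of `(a_ρ)` over `K`: a differential
polynomial of minimal complexity such that `G(b_σ) ⇝ 0` for some pc-sequence `(b_σ)`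
equivalent to `(a_ρ)` -/
def IsMinDiffPoly (S : VDF K Γ) {I : Type u} [LinearOrder I] (a : I → K)
    (G : MvPolynomial ℕ K) : Prop :=
  G ≠ 0 ∧ S.HasMinWitness a G ∧
    ∀ H : MvPolynomial ℕ K, H ≠ 0 → S.HasMinWitness a H →
      dpComplexity G ≤ dpComplexity H

/-- `K` has the differential-henselian configuration property: `ddeg_𝒂 G = 1` for
every divergent pc-sequence `(a_ρ)` in `K` with minimal differential polynomial `G`
over `K` -/
def DhConfig (S : VDF K Γ) : Prop :=
  ∀ (I : Type u) [LinearOrder I] [WellFoundedLT I] [NoMaxOrder I] [SuccOrder I],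
    ∀ (a : I → K) (γ : I → Γ) (G : MvPolynomial ℕ K),
      S.IsPcSeq a → S.GammaEq a γ → S.Divergent a → S.IsMinDiffPoly a G →
      S.ddegCut a γ G = 1

/-- `K` is maximal: it has no proper immediate extension -/
def Maximal (S : VDF K Γ) : Prop :=
  ∀ (M : Type u) (Δ : Type u) [Field M] [AddCommGroup Δ] [LinearOrder Δ] [IsOrderedAddMonoid Δ],
    ∀ (T : VDF M Δ) (f : Hom S T), f.Immediate → Function.Surjective f.toRing

/-- `K` is differential-algebraically maximal: it has no proper immediate extension
that is differentially algebraic over `K` -/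
def DAlgMaximal (S : VDF K Γ) : Prop :=
  ∀ (M : Type u) (Δ : Type u) [Field M] [AddCommGroup Δ] [LinearOrder Δ] [IsOrderedAddMonoid Δ],
    ∀ (T : VDF M Δ) (f : Hom S T), f.Immediate → f.DAlgebraic →
      Function.Surjective f.toRing

/-- two extensions of `K` are isomorphic over `K` -/
def IsomorphicOver {L₀ : Type u} [Field L₀] {Δ₀ : Type u} [AddCommGroup Δ₀] [LinearOrder Δ₀] [IsOrderedAddMonoid Δ₀]
    {L₁ : Type u} [Field L₁] {Δ₁ : Type u} [AddCommGroup Δ₁] [LinearOrder Δ₁] [IsOrderedAddMonoid Δ₁]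
    {S : VDF K Γ} {T₀ : VDF L₀ Δ₀} {T₁ : VDF L₁ Δ₁}
    (f₀ : Hom S T₀) (f₁ : Hom S T₁) : Prop :=
  ∃ g : Hom T₀ T₁, Function.Bijective g.toRing ∧ Function.Bijective g.toGrp ∧
    g.toRing.comp f₀.toRing = f₁.toRing ∧ g.toGrp.comp f₀.toGrp = f₁.toGrp

/-- a differential-henselization of `K`: an immediate d-henselian extension of `K`
that embeds over `K` into every immediate d-henselian extension of `K` -/
def IsDHenselization {S : VDF K Γ} {T : VDF L Γ'} (f : Hom S T) : Prop :=
  f.Immediate ∧ T.DHenselian ∧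
  ∀ (M : Type u) (Δ : Type u) [Field M] [AddCommGroup Δ] [LinearOrder Δ] [IsOrderedAddMonoid Δ],
    ∀ (U : VDF M Δ) (g : Hom S U), g.Immediate → U.DHenselian →
      ∃ h : Hom T U, h.toRing.comp f.toRing = g.toRing ∧
        h.toGrp.comp f.toGrp = g.toGrp

end VDF

/-- a convex subgroup of an ordered abelian group -/
def IsConvexSubgroup {Γ : Type u} [AddCommGroup Γ] [LinearOrder Γ] [IsOrderedAddMonoid Γ] (Δ : AddSubgroup Γ) :
    Prop :=
  ∀ x ∈ Δ, ∀ y : Γ, 0 ≤ y → y ≤ x → y ∈ Δ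

/-- an ordered abelian group has finite (archimedean) rank if it has only finitely
many convex subgroups -/
def FiniteRank (Γ : Type u) [AddCommGroup Γ] [LinearOrder Γ] [IsOrderedAddMonoid Γ] : Prop :=
  {Δ : AddSubgroup Γ | IsConvexSubgroup Δ}.Finite

/-- `Γ` is the union of its finite rank convex subgroups -/
def UnionOfFiniteRank (Γ : Type u) [AddCommGroup Γ] [LinearOrder Γ] [IsOrderedAddMonoid Γ] : Prop :=
  ∀ γ : Γ, ∃ Δ : AddSubgroup Γ, IsConvexSubgroup Δ ∧ FiniteRank ↥Δ ∧ γ ∈ Δ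

/-- an ordered abelian group `Γ` has the dh-configuration property if every valued
differential field of equicharacteristic `0` with small derivation, nontrivial induced
derivation on its residue field, and value group `Γ` has the dh-configuration
property -/
def GroupDhConfig (Γ : Type u) [AddCommGroup Γ] [LinearOrder Γ] [IsOrderedAddMonoid Γ] : Prop :=
  ∀ (K : Type u) [Field K], ∀ S : VDF K Γ, S.ResidueDerNontrivial → S.DhConfig

namespace VDF

variable {K : Type u} [Field K] {Γ : Type u} [AddCommGroup Γ] [LinearOrder Γ] [IsOrderedAddMonoid Γ]

/-- the coarsening of `K` by a convex subgroup `Δ ⊆ Γ`: same field and derivation,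
valuation composed with the quotient map `Γ → Γ/Δ` (here realized abstractly by a
surjective monotone group homomorphism `p` with kernel `Δ`) -/
structure IsCoarsening (S : VDF K Γ) (Δ : AddSubgroup Γ) {Γ' : Type u}
    [AddCommGroup Γ'] [LinearOrder Γ'] [IsOrderedAddMonoid Γ'] (T : VDF K Γ') (p : Γ →+ Γ') : Prop where
  surj : Function.Surjective p
  ker : ∀ γ : Γ, p γ = 0 ↔ γ ∈ Δ
  mono : Monotone p
  same_der : T.der = S.der
  coarse_v : ∀ a : K, T.v a = WithTop.map (⇑p) (S.v a)

/-- membership in the valuation ring `𝒪̇` of the coarsening by `Δ` -/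
def InCoarseO (S : VDF K Γ) (Δ : AddSubgroup Γ) (a : K) : Prop :=
  ∃ δ ∈ Δ, (δ : WithTop Γ) ≤ S.v a

/-- membership in the maximal ideal `𝔪̇` of the coarsening by `Δ` -/
def InCoarseM (S : VDF K Γ) (Δ : AddSubgroup Γ) (a : K) : Prop :=
  ∀ δ ∈ Δ, (δ : WithTop Γ) < S.v a

/-- the specialization `K̇ = 𝒪̇/𝔪̇` of `K` to a convex subgroup `Δ`, realized
abstractly: `π : 𝒪̇ → K̇` is the residue map and `e` identifies the value group of
`K̇` with `Δ` -/
structure IsSpecialization (S : VDF K Γ) (Δ : AddSubgroup Γ) {K' : Type u} [Field K']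
    {Γ'' : Type u} [AddCommGroup Γ''] [LinearOrder Γ''] [IsOrderedAddMonoid Γ''] (T : VDF K' Γ'') (π : K → K')
    (e : Γ'' →+ Γ) : Prop where
  e_strictMono : StrictMono e
  e_range : ∀ γ : Γ, γ ∈ Δ ↔ ∃ δ : Γ'', e δ = γ
  map_one : π 1 = 1
  map_add : ∀ a b : K, S.InCoarseO Δ a → S.InCoarseO Δ b → π (a + b) = π a + π b
  map_mul : ∀ a b : K, S.InCoarseO Δ a → S.InCoarseO Δ b → π (a * b) = π a * π b
  map_zero_iff : ∀ a : K, S.InCoarseO Δ a → (π a = 0 ↔ S.InCoarseM Δ a)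
  surj : ∀ x : K', ∃ a : K, S.InCoarseO Δ a ∧ π a = x
  map_der : ∀ a : K, S.InCoarseO Δ a → π (S.der a) = T.der (π a)
  map_v : ∀ (a : K) (δ : Γ''), S.InCoarseO Δ a →
    S.v a = ((e δ : Γ) : WithTop Γ) → T.v (π a) = (δ : WithTop Γ'')

end VDF

/-- a sequence of values `(γ_ρ)` is `Δ`-fluent: eventually `γ_{ρ'} - γ_ρ > Δ` -/
def DeltaFluent {Γ : Type u} [AddCommGroup Γ] [LinearOrder Γ] [IsOrderedAddMonoid Γ] (Δ : AddSubgroup Γ)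
    {I : Type u} [LinearOrder I] (γ : I → Γ) : Prop :=
  ∃ i₀ : I, ∀ i j : I, i₀ < i → i < j → ∀ δ ∈ Δ, δ < γ j - γ i

/-! Since the derivation is small, `v a ≥ δ` with `δ ≤ 0` forces `v a' ≥ 2δ`, so `𝒪̇` is closed
under the derivation. Hence `P_{+b}` and `P_{×h}` again lie in `𝒪̇{Y}`, and reducing their
coefficients gives `Ṗ_{+ḃ}` and `Ṗ_{×ḣ}`. These are nonzero because conjugation can be undone
(by `-ḃ`, resp. `ḣ⁻¹`), so `P_{+b}, P_{×h} ∉ 𝔪̇{Y}`. For `Q ∈ 𝒪̇{Y} ∖ 𝔪̇{Y}` the value `v Q` lies in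
`Δ`; the coefficients of value `v Q` are exactly those whose residue is nonzero of minimal value
in `K̇`, so `Q` and `Q̇` have the same dominant monomials and `ddeg Q̇ = ddeg Q`. -/

open Finset

lemma Finset.filter_eq_inf_eq_of_strictMono {ι α β : Type*} [LinearOrder α] [OrderTop α]
    [LinearOrder β] [OrderTop β] {φ : β → α} (hφ : StrictMono φ) {s t : Finset ι}
    (hts : t ⊆ s) (ht : t.Nonempty) {f : ι → α} {g : ι → β}
    (hfg : ∀ m ∈ t, f m = φ (g m)) (hgap : ∀ m ∈ s, m ∉ t → ∀ m' ∈ t, φ (g m') < f m) :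
    s.filter (fun m => f m = s.inf f) = t.filter (fun m => g m = t.inf g) := by
  obtain ⟨m₀, hm₀, hinf⟩ := exists_mem_eq_inf t ht g
  have hsinf : s.inf f = φ (g m₀) := by
    refine le_antisymm (hfg m₀ hm₀ ▸ inf_le (hts hm₀)) (Finset.le_inf fun m hm => ?_)
    by_cases hmt : m ∈ t
    · rw [hfg m hmt, ← hinf]
      exact hφ.monotone (inf_le hmt)
    · exact (hgap m hm hmt m₀ hm₀).le
  ext m
  simp only [mem_filter, hsinf, hinf]
  constructor
  · rintro ⟨hm, hfm⟩
    have hmt : m ∈ t := by_contra fun hmt => (hgap m hm hmt m₀ hm₀).ne' hfm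
    exact ⟨hmt, hφ.injective (by rw [← hfg m hmt, hfm])⟩
  · rintro ⟨hmt, hgm⟩
    exact ⟨hts hmt, by rw [hfg m hmt, hgm]⟩

lemma MvPolynomial.exists_map_subtype_eq {σ R : Type*} [CommRing R] {A : Subring R}
    {P : MvPolynomial σ R} (hP : ∀ m, P.coeff m ∈ A) :
    ∃ P₀ : MvPolynomial σ A, map A.subtype P₀ = P := by
  refine mem_range_map_iff_coeffs_subset.2 fun c hc => ?_
  obtain ⟨m, -, rfl⟩ := mem_coeffs_iff.1 hc
  exact ⟨⟨_, hP m⟩, rfl⟩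

lemma coeff_mapCoeffs {K K' : Type u} [Field K] [Field K'] {π : K → K'} (hπ : π 0 = 0)
    (P : MvPolynomial ℕ K) (m : ℕ →₀ ℕ) : (mapCoeffs π P).coeff m = π (P.coeff m) := by
  classical
  rw [mapCoeffs, coeff_sum]
  simp only [coeff_monomial]
  rw [sum_ite_eq' P.support m (fun m' => π (P.coeff m'))]
  split_ifs with hm
  · rfl
  · rw [notMem_support_iff.1 hm, hπ]

lemma mapCoeffs_map_subtype {K K' : Type u} [Field K] [Field K'] {π : K → K'} (hπ : π 0 = 0)
    {A : Subring K} (f : A →+* K') (hf : ∀ x, f x = π x) (P : MvPolynomial ℕ A) :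
    mapCoeffs π (map A.subtype P) = map f P := by
  ext m
  rw [coeff_mapCoeffs hπ, coeff_map, coeff_map, hf]
  rfl

noncomputable section Conjugation

variable {R R' : Type*} [CommRing R] [CommRing R']

/-- The image of `Y⁽ⁱ⁾` under `Y ↦ a + Y`, where `d k` plays the role of `a⁽ᵏ⁾`. -/
def addConjVar (d : ℕ → R) (i : ℕ) : MvPolynomial ℕ R := C (d i) + X i

/-- The image of `Y⁽ⁱ⁾` under `Y ↦ aY`, where `d k` plays the role of `a⁽ᵏ⁾`. -/
def mulConjVar (d : ℕ → R) (i : ℕ) : MvPolynomial ℕ R :=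
  ∑ j ∈ range (i + 1), C ((i.choose j : R) * d (i - j)) * X j

/-- By the Leibniz rule, `leibnizSeq (c⁽ᵏ⁾) (a⁽ᵏ⁾)` is the sequence `((c a)⁽ⁿ⁾)`. -/
def leibnizSeq (d' d : ℕ → R) (n : ℕ) : R :=
  ∑ l ∈ range (n + 1), (n.choose l : R) * (d' l * d (n - l))

lemma map_addConjVar (f : R →+* R') (d : ℕ → R) (i : ℕ) :
    map f (addConjVar d i) = addConjVar (f ∘ d) i := by
  simp [addConjVar]

lemma map_mulConjVar (f : R →+* R') (d : ℕ → R) (i : ℕ) :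
    map f (mulConjVar d i) = mulConjVar (f ∘ d) i := by
  simp [mulConjVar]

lemma bind₁_addConjVar_addConjVar (d' d : ℕ → R) (i : ℕ) :
    bind₁ (addConjVar d') (addConjVar d i) = addConjVar (d + d') i := by
  simp only [addConjVar, map_add, bind₁_C_right, bind₁_X_right, Pi.add_apply]
  ring

lemma addConjVar_zero : addConjVar (0 : ℕ → R) = X := by
  ext1 i
  simp [addConjVar]

lemma sum_Ico_choose_mul_choose {k i : ℕ} (hki : k ≤ i) (f : ℕ → ℕ → R) :
    ∑ j ∈ Ico k (i + 1), (i.choose j * j.choose k : R) * f (i - j) (j - k)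
      = i.choose k * ∑ l ∈ range (i - k + 1), ((i - k).choose l : R) * f (i - k - l) l := by
  rw [sum_Ico_eq_sum_range, show i + 1 - k = i - k + 1 by omega, mul_sum]
  refine sum_congr rfl fun l hl => ?_
  have hl : l ≤ i - k := Nat.lt_succ_iff.1 (mem_range.1 hl)
  have hchoose := Nat.choose_mul (n := i) (k := k + l) (s := k) (Nat.le_add_right k l)
  rw [Nat.add_sub_cancel_left] at hchoose
  rw [show i - (k + l) = i - k - l by omega, Nat.add_sub_cancel_left, ← mul_assoc]
  congr 1
  rw [← Nat.cast_mul, ← Nat.cast_mul, hchoose]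

lemma bind₁_mulConjVar_mulConjVar (d' d : ℕ → R) (i : ℕ) :
    bind₁ (mulConjVar d') (mulConjVar d i) = mulConjVar (leibnizSeq d' d) i := by
  have hexpand : bind₁ (mulConjVar d') (mulConjVar d i)
      = ∑ j ∈ Ico 0 (i + 1), ∑ k ∈ Ico 0 (j + 1),
          C ((i.choose j * j.choose k : R) * (d (i - j) * d' (j - k))) * X k := by
    simp only [mulConjVar, map_sum, map_mul, bind₁_C_right, bind₁_X_right, mul_sum,
      ← range_eq_Ico]
    refine sum_congr rfl fun j _ => sum_congr rfl fun k _ => ?_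
    ring
  rw [hexpand, ← sum_Ico_Ico_comm, mulConjVar, range_eq_Ico]
  refine sum_congr rfl fun k hk => ?_
  have hki : k ≤ i := Nat.lt_succ_iff.1 (mem_Ico.1 hk).2
  rw [← sum_mul, ← map_sum, sum_Ico_choose_mul_choose hki (fun p q => d p * d' q), leibnizSeq]
  congr 3
  refine sum_congr rfl fun l _ => ?_
  ring

lemma mulConjVar_eq_X {d : ℕ → R} (hd : ∀ n, d n = if n = 0 then 1 else 0) :
    mulConjVar d = X := by
  ext1 i
  rw [mulConjVar, sum_eq_single i]
  · simp [hd]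
  · intro j hj hji
    have : i - j ≠ 0 := by have := mem_range.1 hj; omega
    simp [hd, this]
  · simp

end Conjugation

namespace VDF

variable {K Γ : Type u} [Field K] [AddCommGroup Γ] [LinearOrder Γ] [IsOrderedAddMonoid Γ]
variable (S : VDF K Γ)

lemma v_zero : S.v 0 = ⊤ := (S.v_eq_top_iff 0).2 rfl

lemma v_one : S.v 1 = 0 := by
  obtain ⟨γ, hγ⟩ := WithTop.ne_top_iff_exists.1 (mt (S.v_eq_top_iff 1).1 one_ne_zero)
  have h := S.v_mul 1 1
  rw [one_mul, ← hγ, ← WithTop.coe_add, WithTop.coe_eq_coe, left_eq_add] at h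
  rw [← hγ, h, WithTop.coe_zero]

noncomputable def toAddValuation : AddValuation K (WithTop Γ) :=
  AddValuation.of S.v S.v_zero S.v_one S.v_add S.v_mul

lemma v_neg (a : K) : S.v (-a) = S.v a := S.toAddValuation.map_neg a

lemma v_sub (a b : K) : min (S.v a) (S.v b) ≤ S.v (a - b) := S.toAddValuation.map_sub a b

noncomputable def derivation : Derivation ℤ K K :=
  Derivation.mk' (AddMonoidHom.mk' S.der S.der_add).toIntLinearMap fun a b => by
    change S.der (a * b) = a * S.der b + b * S.der a
    rw [S.der_mul, mul_comm b]

@[simp]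
lemma coe_derivation : ⇑S.derivation = S.der := rfl

lemma iterate_der_mul (n : ℕ) (a b : K) :
    S.der^[n] (a * b)
      = ∑ l ∈ range (n + 1), (n.choose l : K) * (S.der^[l] a * S.der^[n - l] b) := by
  rw [← Nat.sum_antidiagonal_eq_sum_range_succ
    (fun i j => (n.choose i : K) * (S.der^[i] a * S.der^[j] b)) n]
  induction n with
  | zero => simp
  | succ n ih =>
    rw [sum_antidiagonal_choose_succ_mul (fun i j => S.der^[i] a * S.der^[j] b) n,
      Function.iterate_succ_apply', ih, ← coe_derivation]
    simp only [map_sum, Derivation.leibniz, Derivation.map_natCast, smul_eq_mul, mul_add,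
      sum_add_distrib, mul_zero, add_zero, Function.iterate_succ_apply',
      add_right_inj]
    refine Finset.sum_congr rfl fun ij hij => ?_
    rw [n.choose_symm_of_eq_add (mem_antidiagonal.1 hij).symm]
    ring

lemma addConj_eq_bind₁ (a : K) (P : MvPolynomial ℕ K) :
    S.addConj a P = bind₁ (addConjVar fun k => S.der^[k] a) P := rfl

lemma mulConj_eq_bind₁ (a : K) (P : MvPolynomial ℕ K) :
    S.mulConj a P = bind₁ (mulConjVar fun k => S.der^[k] a) P := rfl

lemma addConj_addConj (a c : K) (P : MvPolynomial ℕ K) :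
    S.addConj c (S.addConj a P) = S.addConj (a + c) P := by
  have hseq : ((S.der^[·] a) + (S.der^[·] c)) = (S.der^[·] (a + c)) :=
    funext fun k => (iterate_map_add S.derivation k a c).symm
  rw [addConj_eq_bind₁, addConj_eq_bind₁, bind₁_bind₁]
  simp only [bind₁_addConjVar_addConjVar, hseq]
  rfl

lemma addConj_zero (P : MvPolynomial ℕ K) : S.addConj 0 P = P := by
  have hseq : (S.der^[·] (0 : K)) = 0 := funext fun k => iterate_map_zero S.derivation k
  rw [addConj_eq_bind₁, hseq, addConjVar_zero, bind₁_X_left, AlgHom.id_apply]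

lemma addConj_injective (a : K) : Function.Injective (S.addConj a) :=
  Function.LeftInverse.injective (g := S.addConj (-a)) fun P => by
    rw [addConj_addConj, add_neg_cancel, addConj_zero]

lemma addConj_eq_zero_iff (a : K) {P : MvPolynomial ℕ K} : S.addConj a P = 0 ↔ P = 0 :=
  (S.addConj_injective a).eq_iff' (map_zero _)

lemma mulConj_mulConj (a c : K) (P : MvPolynomial ℕ K) :
    S.mulConj c (S.mulConj a P) = S.mulConj (c * a) P := by
  have hseq : leibnizSeq (S.der^[·] c) (S.der^[·] a) = (S.der^[·] (c * a)) :=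
    funext fun n => (S.iterate_der_mul n c a).symm
  rw [mulConj_eq_bind₁, mulConj_eq_bind₁, bind₁_bind₁]
  simp only [bind₁_mulConjVar_mulConjVar, hseq]
  rfl

lemma iterate_der_one (n : ℕ) : S.der^[n] 1 = if n = 0 then 1 else 0 := by
  cases n with
  | zero => rfl
  | succ n =>
    rw [Function.iterate_succ_apply, ← coe_derivation, Derivation.map_one_eq_zero,
      iterate_map_zero, if_neg n.succ_ne_zero]

lemma mulConj_one (P : MvPolynomial ℕ K) : S.mulConj 1 P = P := by
  rw [mulConj_eq_bind₁, mulConjVar_eq_X S.iterate_der_one, bind₁_X_left, AlgHom.id_apply]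

lemma mulConj_injective {a : K} (ha : a ≠ 0) : Function.Injective (S.mulConj a) :=
  Function.LeftInverse.injective (g := S.mulConj a⁻¹) fun P => by
    rw [mulConj_mulConj, inv_mul_cancel₀ ha, mulConj_one]

lemma mulConj_eq_zero_iff {a : K} (ha : a ≠ 0) {P : MvPolynomial ℕ K} :
    S.mulConj a P = 0 ↔ P = 0 :=
  (S.mulConj_injective ha).eq_iff' (map_zero _)


lemma der_mul_eq_sub (a t : K) : S.der a * t = S.der (a * t) - a * S.der t := by
  rw [S.der_mul]; ring

lemma v_der_nonneg {a : K} (ha : 0 ≤ S.v a) : 0 ≤ S.v (S.der a) := by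
  by_contra! hneg
  obtain ⟨γ, hγ⟩ := WithTop.ne_top_iff_exists.1 (hneg.trans_le le_top).ne
  have hγ0 : γ < 0 := by rw [← hγ] at hneg; exact_mod_cast hneg
  obtain ⟨t, ht⟩ := S.v_surjective (-γ)
  have ht0 : 0 < S.v t := by rw [ht]; exact_mod_cast neg_pos.2 hγ0
  have h1 : 0 < S.v (S.der (a * t)) :=
    S.small_der _ (by rw [S.v_mul]; exact ht0.trans_le (le_add_of_nonneg_left ha))
  have h2 : 0 < S.v (a * S.der t) := by
    rw [S.v_mul]; exact (S.small_der t ht0).trans_le (le_add_of_nonneg_left ha)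
  have h3 : S.v (S.der a * t) = 0 := by
    rw [S.v_mul, ← hγ, ht, ← WithTop.coe_add, add_neg_cancel, WithTop.coe_zero]
  have := (lt_min h1 h2).trans_le (S.v_sub _ _)
  rw [← der_mul_eq_sub, h3] at this
  exact lt_irrefl _ this

lemma v_der_ge {a : K} {δ : Γ} (hδ : δ ≤ 0) (ha : (δ : WithTop Γ) ≤ S.v a) :
    ((δ + δ : Γ) : WithTop Γ) ≤ S.v (S.der a) := by
  obtain ⟨t, ht⟩ := S.v_surjective (-δ)
  have ht0 : 0 ≤ S.v t := by rw [ht]; exact_mod_cast neg_nonneg.2 hδ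
  have hat : 0 ≤ S.v (a * t) := by
    rw [S.v_mul, ht]
    calc (0 : WithTop Γ) = ((δ + -δ : Γ) : WithTop Γ) := by rw [add_neg_cancel, WithTop.coe_zero]
      _ ≤ S.v a + ((-δ : Γ) : WithTop Γ) := by rw [WithTop.coe_add]; exact add_le_add ha le_rfl
  have h1 : (δ : WithTop Γ) ≤ S.v (S.der (a * t)) :=
    (WithTop.coe_le_coe.2 hδ).trans (S.v_der_nonneg hat)
  have h2 : (δ : WithTop Γ) ≤ S.v (a * S.der t) := by
    rw [S.v_mul]; exact le_add_of_le_of_nonneg ha (S.v_der_nonneg ht0)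
  have h3 := (le_min h1 h2).trans (S.v_sub _ _)
  rw [← der_mul_eq_sub, S.v_mul, ht] at h3
  rcases eq_or_ne (S.v (S.der a)) ⊤ with h | h
  · rw [h]; exact le_top
  obtain ⟨γ, hγ⟩ := WithTop.ne_top_iff_exists.1 h
  rw [← hγ, ← WithTop.coe_add, WithTop.coe_le_coe] at h3
  rw [← hγ, WithTop.coe_le_coe]
  simpa using add_le_add h3 (le_refl δ)

lemma map_bind₁_addConjVar_iterate {R : Type*} [CommRing R] (f : R →+* K)
    {D : R → R} (hD : Function.Semiconj f D S.der) (x : R) (P : MvPolynomial ℕ R) :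
    map f (bind₁ (addConjVar (D^[·] x)) P) = S.addConj (f x) (map f P) := by
  have hseq : (f ∘ (D^[·] x)) = (S.der^[·] (f x)) := funext fun k => hD.iterate_right k x
  simp only [map_bind₁, map_addConjVar, hseq]
  rfl

lemma map_bind₁_mulConjVar_iterate {R : Type*} [CommRing R] (f : R →+* K)
    {D : R → R} (hD : Function.Semiconj f D S.der) (x : R) (P : MvPolynomial ℕ R) :
    map f (bind₁ (mulConjVar (D^[·] x)) P) = S.mulConj (f x) (map f P) := by
  have hseq : (f ∘ (D^[·] x)) = (S.der^[·] (f x)) := funext fun k => hD.iterate_right k x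
  simp only [map_bind₁, map_mulConjVar, hseq]
  rfl

variable (Δ : AddSubgroup Γ)

def coarseRing : Subring K where
  carrier := {a | S.InCoarseO Δ a}
  zero_mem' := ⟨0, Δ.zero_mem, by rw [S.v_zero]; exact le_top⟩
  one_mem' := ⟨0, Δ.zero_mem, by rw [S.v_one, WithTop.coe_zero]⟩
  add_mem' := by
    rintro a b ⟨δ₁, h₁, l₁⟩ ⟨δ₂, h₂, l₂⟩
    refine ⟨min δ₁ δ₂, min_rec' (· ∈ Δ) h₁ h₂, ?_⟩
    rw [WithTop.coe_min]
    exact (min_le_min l₁ l₂).trans (S.v_add a b)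
  neg_mem' := by
    rintro a ⟨δ, hδ, l⟩
    exact ⟨δ, hδ, by rwa [S.v_neg]⟩
  mul_mem' := by
    rintro a b ⟨δ₁, h₁, l₁⟩ ⟨δ₂, h₂, l₂⟩
    refine ⟨δ₁ + δ₂, add_mem h₁ h₂, ?_⟩
    rw [S.v_mul, WithTop.coe_add]
    exact add_le_add l₁ l₂

variable {S Δ}

lemma der_mem_coarseRing {a : K} (ha : a ∈ coarseRing S Δ) : S.der a ∈ coarseRing S Δ := by
  obtain ⟨δ, hδ, hle⟩ := ha
  have hmin : min δ 0 ∈ Δ := min_rec' (· ∈ Δ) hδ Δ.zero_mem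
  refine ⟨min δ 0 + min δ 0, add_mem hmin hmin, ?_⟩
  exact S.v_der_ge (min_le_right δ 0) ((WithTop.coe_le_coe.2 (min_le_left δ 0)).trans hle)

variable (S Δ)

def coarseDer (x : coarseRing S Δ) : coarseRing S Δ := ⟨S.der x, der_mem_coarseRing x.2⟩

lemma semiconj_coarseDer : Function.Semiconj (coarseRing S Δ).subtype (coarseDer S Δ) S.der :=
  fun _ => rfl

variable {S Δ}

lemma inCoarseM_zero : S.InCoarseM Δ 0 := fun δ _ => by
  rw [S.v_zero]; exact WithTop.coe_lt_top δ

lemma ne_zero_of_not_inCoarseM {a : K} (h : ¬ S.InCoarseM Δ a) : a ≠ 0 :=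
  fun h0 => h (h0 ▸ inCoarseM_zero)

lemma exists_v_eq_of_not_inCoarseM (hconv : IsConvexSubgroup Δ) {a : K}
    (ha : S.InCoarseO Δ a) (hm : ¬ S.InCoarseM Δ a) : ∃ γ ∈ Δ, S.v a = γ := by
  obtain ⟨δ₁, h₁, l₁⟩ := ha
  obtain ⟨δ₂, h₂, l₂⟩ : ∃ δ₂ ∈ Δ, S.v a ≤ δ₂ := by simpa [InCoarseM] using hm
  obtain ⟨γ, hγ⟩ := WithTop.ne_top_iff_exists.1 (l₂.trans_lt (WithTop.coe_lt_top δ₂)).ne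
  rw [← hγ, WithTop.coe_le_coe] at l₁ l₂
  refine ⟨γ, ?_, hγ.symm⟩
  rcases le_total 0 γ with h0 | h0
  · exact hconv δ₂ h₂ γ h0 l₂
  · simpa using neg_mem (hconv (-δ₁) (neg_mem h₁) (-γ) (neg_nonneg.2 h0) (neg_le_neg l₁))

end VDF

namespace VDF.IsSpecialization

variable {K Γ K' Γ'' : Type u} [Field K] [AddCommGroup Γ] [LinearOrder Γ] [IsOrderedAddMonoid Γ]
  [Field K'] [AddCommGroup Γ''] [LinearOrder Γ''] [IsOrderedAddMonoid Γ'']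
  {S : VDF K Γ} {Δ : AddSubgroup Γ} {T : VDF K' Γ''} {π : K → K'} {e : Γ'' →+ Γ}

lemma map_zero (hs : S.IsSpecialization Δ T π e) : π 0 = 0 :=
  (hs.map_zero_iff 0 (zero_mem (coarseRing S Δ))).2 inCoarseM_zero

def residueHom (hs : S.IsSpecialization Δ T π e) : coarseRing S Δ →+* K' where
  toFun x := π x
  map_one' := hs.map_one
  map_mul' x y := hs.map_mul x y x.2 y.2
  map_zero' := hs.map_zero
  map_add' x y := hs.map_add x y x.2 y.2

@[simp]
lemma residueHom_apply (hs : S.IsSpecialization Δ T π e) (x : coarseRing S Δ) :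
    hs.residueHom x = π x := rfl

lemma residueHom_eq_zero_iff (hs : S.IsSpecialization Δ T π e) (x : coarseRing S Δ) :
    hs.residueHom x = 0 ↔ S.InCoarseM Δ x :=
  hs.map_zero_iff x x.2

lemma semiconj_residueHom (hs : S.IsSpecialization Δ T π e) :
    Function.Semiconj hs.residueHom (coarseDer S Δ) T.der :=
  fun x => hs.map_der x x.2

lemma v_eq_map_v (hs : S.IsSpecialization Δ T π e) (hconv : IsConvexSubgroup Δ) {a : K}
    (ha : S.InCoarseO Δ a) (hm : ¬ S.InCoarseM Δ a) : S.v a = WithTop.map e (T.v (π a)) := by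
  obtain ⟨γ, hγΔ, hv⟩ := exists_v_eq_of_not_inCoarseM hconv ha hm
  obtain ⟨δ, rfl⟩ := (hs.e_range γ).1 hγΔ
  rw [hs.map_v a δ ha hv, hv, WithTop.map_coe]

lemma ddeg_map_residueHom (hs : S.IsSpecialization Δ T π e) (hconv : IsConvexSubgroup Δ)
    {R : MvPolynomial ℕ (coarseRing S Δ)} (hR : map hs.residueHom R ≠ 0) :
    T.ddeg (map hs.residueHom R) = S.ddeg (map (coarseRing S Δ).subtype R) := by
  set A := map (coarseRing S Δ).subtype R
  set B := map hs.residueHom R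
  have hAO : ∀ m, S.InCoarseO Δ (A.coeff m) := fun m => by
    rw [coeff_map]; exact (R.coeff m).2
  have hcoeff : ∀ m, B.coeff m = π (A.coeff m) := fun m => by
    rw [coeff_map, coeff_map]; rfl
  have hsupp : ∀ m, m ∈ B.support ↔ ¬ S.InCoarseM Δ (A.coeff m) := fun m => by
    rw [mem_support_iff, coeff_map, Ne, hs.residueHom_eq_zero_iff, coeff_map]; rfl
  unfold ddeg vP
  congr 1
  refine (Finset.filter_eq_inf_eq_of_strictMono (WithTop.strictMono_map_iff.2 hs.e_strictMono)
    (fun m hm => ?_) (support_nonempty.2 hR) (fun m hm => ?_) (fun m _ hm m' hm' => ?_)).symm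
  · exact mem_support_iff.2 (ne_zero_of_not_inCoarseM ((hsupp m).1 hm))
  · rw [hcoeff]
    exact hs.v_eq_map_v hconv (hAO m) ((hsupp m).1 hm)
  · obtain ⟨δ, hδ⟩ :=
      WithTop.ne_top_iff_exists.1 (mt (T.v_eq_top_iff _).1 (mem_support_iff.1 hm'))
    rw [← hδ, WithTop.map_coe]
    exact not_not.1 (mt (hsupp m).2 hm) (e δ) ((hs.e_range _).2 ⟨δ, rfl⟩)

lemma ddeg_addConj_map_residueHom (hs : S.IsSpecialization Δ T π e)
    (hconv : IsConvexSubgroup Δ) {P : MvPolynomial ℕ (coarseRing S Δ)}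
    (hP : map hs.residueHom P ≠ 0) (b : coarseRing S Δ) :
    T.ddeg (T.addConj (π b) (map hs.residueHom P))
      = S.ddeg (S.addConj b (map (coarseRing S Δ).subtype P)) := by
  have hS := S.map_bind₁_addConjVar_iterate _ (semiconj_coarseDer S Δ) b P
  have hT := T.map_bind₁_addConjVar_iterate _ hs.semiconj_residueHom b P
  rw [residueHom_apply] at hT
  rw [Subring.coe_subtype] at hS
  rw [← hS, ← hT]
  exact hs.ddeg_map_residueHom hconv (hT ▸ (T.addConj_eq_zero_iff _).not.2 hP)

lemma ddeg_mulConj_map_residueHom (hs : S.IsSpecialization Δ T π e)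
    (hconv : IsConvexSubgroup Δ) {P : MvPolynomial ℕ (coarseRing S Δ)}
    (hP : map hs.residueHom P ≠ 0) {h : coarseRing S Δ} (hh : ¬ S.InCoarseM Δ h) :
    T.ddeg (T.mulConj (π h) (map hs.residueHom P))
      = S.ddeg (S.mulConj h (map (coarseRing S Δ).subtype P)) := by
  have hS := S.map_bind₁_mulConjVar_iterate _ (semiconj_coarseDer S Δ) h P
  have hT := T.map_bind₁_mulConjVar_iterate _ hs.semiconj_residueHom h P
  rw [residueHom_apply] at hT
  rw [Subring.coe_subtype] at hS
  rw [← hS, ← hT]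
  have hπh : π h ≠ 0 := mt (hs.residueHom_eq_zero_iff h).1 hh
  exact hs.ddeg_map_residueHom hconv (hT ▸ (T.mulConj_eq_zero_iff hπh).not.2 hP)

end VDF.IsSpecialization

theorem statement7_general {K Γ : Type u} [Field K] [AddCommGroup Γ] [LinearOrder Γ] [IsOrderedAddMonoid Γ]
    (S : VDF K Γ)
    (Δ : AddSubgroup Γ) (hconv : IsConvexSubgroup Δ)
    {K' Γ'' : Type u} [Field K'] [AddCommGroup Γ''] [LinearOrder Γ''] [IsOrderedAddMonoid Γ'']
    (T : VDF K' Γ'') (π : K → K') (e : Γ'' →+ Γ)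
    (hs : VDF.IsSpecialization S Δ T π e)
    (P : MvPolynomial ℕ K)
    (hPO : ∀ m, S.InCoarseO Δ (P.coeff m))
    (hPm : ∃ m, ¬ S.InCoarseM Δ (P.coeff m))
    (b : K) (hb : S.InCoarseO Δ b)
    (h : K) (hhO : S.InCoarseO Δ h) (hhm : ¬ S.InCoarseM Δ h) :
    T.ddeg (T.addConj (π b) (mapCoeffs π P)) = S.ddeg (S.addConj b P) ∧
    T.ddeg (T.mulConj (π h) (mapCoeffs π P)) = S.ddeg (S.mulConj h P) := by
  obtain ⟨P₀, rfl⟩ := exists_map_subtype_eq (A := S.coarseRing Δ) hPO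
  have hP₀ : map hs.residueHom P₀ ≠ 0 := by
    obtain ⟨m, hm⟩ := hPm
    refine ne_of_apply_ne (coeff m) ?_
    rw [coeff_map, coeff_zero, Ne, hs.residueHom_eq_zero_iff]
    rwa [coeff_map] at hm
  rw [mapCoeffs_map_subtype hs.map_zero hs.residueHom hs.residueHom_apply]
  exact ⟨hs.ddeg_addConj_map_residueHom hconv hP₀ ⟨b, hb⟩,
    hs.ddeg_mulConj_map_residueHom hconv hP₀ (h := ⟨h, hhO⟩) hhm⟩

/-- for a proper nontrivial convex subgroup `Δ` of `Γ` with coarsened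
valuation ring `𝒪̇`, maximal ideal `𝔪̇`, and specialization `K̇ = 𝒪̇/𝔪̇`: if
`P ∈ 𝒪̇{Y} ∖ 𝔪̇{Y}`, `b ∈ 𝒪̇`, and `h ∈ 𝒪̇ ∖ 𝔪̇`, then `ddeg Ṗ_{+ḃ} = ddeg P_{+b}`
and `ddeg Ṗ_{×ḣ} = ddeg P_{×h}`. -/
theorem statement7 {K Γ : Type u} [Field K] [AddCommGroup Γ] [LinearOrder Γ] [IsOrderedAddMonoid Γ]
    (S : VDF K Γ) (hder : S.DerNontrivial) (hval : S.ValNontrivial)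
    (Δ : AddSubgroup Γ) (hconv : IsConvexSubgroup Δ) (hbot : Δ ≠ ⊥) (htop : Δ ≠ ⊤)
    {K' Γ'' : Type u} [Field K'] [AddCommGroup Γ''] [LinearOrder Γ''] [IsOrderedAddMonoid Γ'']
    (T : VDF K' Γ'') (π : K → K') (e : Γ'' →+ Γ)
    (hs : VDF.IsSpecialization S Δ T π e)
    (P : MvPolynomial ℕ K)
    (hPO : ∀ m, S.InCoarseO Δ (P.coeff m))
    (hPm : ∃ m, ¬ S.InCoarseM Δ (P.coeff m))
    (b : K) (hb : S.InCoarseO Δ b)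
    (h : K) (hhO : S.InCoarseO Δ h) (hhm : ¬ S.InCoarseM Δ h) :
    T.ddeg (T.addConj (π b) (mapCoeffs π P)) = S.ddeg (S.addConj b P) ∧
    T.ddeg (T.mulConj (π h) (mapCoeffs π P)) = S.ddeg (S.mulConj h P) :=
  statement7_general S Δ hconv T π e hs P hPO hPm b hb h hhO hhm
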